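/- Let d ≥ 2 be even and X'' = Σ_{m odd, m≤d−1} (−1)^{γ_m} (−i|m+1⟩⟨m| + i|m⟩⟨m+1|). Then X'' is Hermitian, traceless, (X'')² = I, and tr[ρ_ghz (X'' ⊗ X'')] = −1. -/

import Mathlib

open Matrix Kronecker

/-- The two-qudit GHZ state `ρ = (1/d) Σ_{j,k} |j⟩⟨k| ⊗ |j⟩⟨k|`. -/
noncomputable def ghz (d : ℕ) : Matrix (Fin d × Fin d) (Fin d × Fin d) ℂ :=
  (1 / (d : ℂ)) •
    ∑ j : Fin d, ∑ k : Fin d,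
      (Matrix.single j k (1 : ℂ)) ⊗ₖ (Matrix.single j k (1 : ℂ))

lemma std_transpose {N : ℕ} (i j : Fin N) (c : ℂ) :
    (Matrix.single i j c)ᵀ = Matrix.single j i c := by
  ext a b
  simp [Matrix.single, Matrix.transpose_apply, and_comm]

lemma std_conjTranspose {N : ℕ} (i j : Fin N) :
    (Matrix.single i j (1 : ℂ))ᴴ = Matrix.single j i (1 : ℂ) := by
  ext a b
  simp [Matrix.single, Matrix.conjTranspose_apply, and_comm, apply_ite]

lemma helper_diag {N : ℕ} (a b : Fin N) (hab : b ≠ a) :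
    ((-Complex.I) • Matrix.single b a (1 : ℂ) +
      Complex.I • Matrix.single a b (1 : ℂ)) *
    ((-Complex.I) • Matrix.single b a (1 : ℂ) +
      Complex.I • Matrix.single a b (1 : ℂ)) =
    Matrix.single a a (1 : ℂ) + Matrix.single b b (1 : ℂ) := by
  rw [add_mul, mul_add, mul_add]
  rw [smul_mul_assoc, smul_mul_assoc, smul_mul_assoc, smul_mul_assoc,
    mul_smul_comm, mul_smul_comm, mul_smul_comm, mul_smul_comm]
  rw [Matrix.single_mul_single_of_ne (h := hab.symm), Matrix.single_mul_single_of_ne (h := hab),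
    Matrix.single_mul_single_same, Matrix.single_mul_single_same]
  simp only [smul_zero, add_zero, zero_add, smul_smul, neg_mul, mul_neg, Complex.I_mul_I, neg_neg,
    one_smul, mul_one]
  exact add_comm (Matrix.single b b (1:ℂ)) (Matrix.single a a (1:ℂ))

lemma helper_off {N : ℕ} (a b a' b' : Fin N) (h1 : a ≠ a') (h2 : a ≠ b')
    (h3 : b ≠ a') (h4 : b ≠ b') :
    ((-Complex.I) • Matrix.single b a (1 : ℂ) +
      Complex.I • Matrix.single a b (1 : ℂ)) *
    ((-Complex.I) • Matrix.single b' a' (1 : ℂ) +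
      Complex.I • Matrix.single a' b' (1 : ℂ)) = 0 := by
  rw [add_mul, mul_add, mul_add]
  rw [smul_mul_assoc, smul_mul_assoc, smul_mul_assoc, smul_mul_assoc,
    mul_smul_comm, mul_smul_comm, mul_smul_comm, mul_smul_comm]
  rw [Matrix.single_mul_single_of_ne (h := h2), Matrix.single_mul_single_of_ne (h := h1),
    Matrix.single_mul_single_of_ne (h := h4), Matrix.single_mul_single_of_ne (h := h3)]
  simp

/-- For even `d = 2e ≥ 2` and
`X'' = Σ_{m odd} (−1)^{γ_m} (−i|m+1⟩⟨m| + i|m⟩⟨m+1|)` (0-indexed: the sum pairs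
the basis vectors `2m` and `2m+1`), `X''` is Hermitian, traceless, `X''² = 1`,
and `tr[ρ_ghz (X'' ⊗ X'')] = −1`. -/
theorem stmt_13 (e : ℕ) (he : 1 ≤ e)
    (γ : Fin e → ℕ) (hγpos : ∀ m, 1 ≤ γ m)
    (X : Matrix (Fin (2 * e)) (Fin (2 * e)) ℂ)
    (hX : X = ∑ m : Fin e, ((-1 : ℂ) ^ γ m) •
        ((-Complex.I) • Matrix.single (⟨2 * (m : ℕ) + 1, by omega⟩ : Fin (2 * e))
            (⟨2 * (m : ℕ), by omega⟩ : Fin (2 * e)) (1 : ℂ) +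
          Complex.I • Matrix.single (⟨2 * (m : ℕ), by omega⟩ : Fin (2 * e))
            (⟨2 * (m : ℕ) + 1, by omega⟩ : Fin (2 * e)) (1 : ℂ))) :
    X.IsHermitian ∧ X.trace = 0 ∧ X * X = 1 ∧
      (ghz (2 * e) * (X ⊗ₖ X)).trace = -1 := by
  have hne : ∀ m : Fin e,
      (⟨2 * (m : ℕ) + 1, by omega⟩ : Fin (2 * e)) ≠ ⟨2 * (m : ℕ), by omega⟩ := by
    intro m h
    have := congrArg Fin.val h
    simp at this
  -- Hermitian
  have hherm : X.IsHermitian := by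
    rw [Matrix.IsHermitian, hX, Matrix.conjTranspose_sum]
    refine Finset.sum_congr rfl fun m _ => ?_
    rw [Matrix.conjTranspose_smul, Matrix.conjTranspose_add, Matrix.conjTranspose_smul,
      Matrix.conjTranspose_smul, std_conjTranspose, std_conjTranspose]
    simp only [star_pow, star_neg, star_one, Complex.star_def, Complex.conj_I, neg_neg]
    congr 1
    exact add_comm _ _
  -- trace
  have htr : X.trace = 0 := by
    rw [hX, Matrix.trace_sum]
    refine Finset.sum_eq_zero fun m _ => ?_
    rw [Matrix.trace_smul, Matrix.trace_add, Matrix.trace_smul, Matrix.trace_smul,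
      Matrix.trace_single_eq_of_ne _ _ _ (hne m),
      Matrix.trace_single_eq_of_ne _ _ _ (hne m).symm]
    simp
  -- transpose
  have htrans : Xᵀ = -X := by
    rw [hX, Matrix.transpose_sum, ← Finset.sum_neg_distrib]
    refine Finset.sum_congr rfl fun m _ => ?_
    rw [Matrix.transpose_smul, Matrix.transpose_add, Matrix.transpose_smul,
      Matrix.transpose_smul, std_transpose, std_transpose]
    rw [← smul_neg]
    congr 1
    rw [neg_add, ← neg_smul, ← neg_smul, neg_neg]
    abel
  -- X * X = 1
  have hsq : X * X = 1 := by
    have key : X * X = ∑ m : Fin e,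
        (Matrix.single (⟨2 * (m : ℕ), by omega⟩ : Fin (2 * e))
          (⟨2 * (m : ℕ), by omega⟩ : Fin (2 * e)) (1 : ℂ) +
         Matrix.single (⟨2 * (m : ℕ) + 1, by omega⟩ : Fin (2 * e))
          (⟨2 * (m : ℕ) + 1, by omega⟩ : Fin (2 * e)) (1 : ℂ)) := by
      rw [hX, Finset.sum_mul_sum]
      refine Finset.sum_congr rfl fun m _ => ?_
      rw [Finset.sum_eq_single m]
      · rw [smul_mul_assoc, mul_smul_comm, smul_smul, ← pow_add,
          helper_diag _ _ (hne m)]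
        have : ((-1 : ℂ)) ^ (γ m + γ m) = 1 := by
          rw [show γ m + γ m = 2 * γ m by ring, pow_mul]
          norm_num
        rw [this, one_smul]
      · intro n _ hnm
        have hmn : (m : ℕ) ≠ (n : ℕ) := fun h => hnm.symm (Fin.ext h)
        rw [smul_mul_assoc, mul_smul_comm,
          helper_off _ _ _ _ (by simp [Fin.ext_iff]; omega) (by simp [Fin.ext_iff]; omega)
            (by simp [Fin.ext_iff]; omega) (by simp [Fin.ext_iff]; omega)]
        simp
      · intro h
        exact absurd (Finset.mem_univ m) h
    rw [key]
    ext i j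
    simp only [Matrix.sum_apply, Matrix.add_apply, Matrix.one_apply]
    by_cases hij : i = j
    · subst hij
      rw [Finset.sum_eq_single (⟨(i : ℕ) / 2, by omega⟩ : Fin e)]
      · have hi2 : 2 * ((i : ℕ) / 2) = (i : ℕ) ∨ 2 * ((i : ℕ) / 2) + 1 = (i : ℕ) := by omega
        rcases hi2 with h | h
        · rw [if_pos rfl]
          have h1 : (⟨2 * ((i : ℕ) / 2), by omega⟩ : Fin (2 * e)) = i := Fin.ext h
          have h2 : (⟨2 * ((i : ℕ) / 2) + 1, by omega⟩ : Fin (2 * e)) ≠ i := by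
            simp [Fin.ext_iff]; omega
          rw [h1]
          simp [Matrix.single_apply_of_ne _ _ _ _ _ (fun hc => h2 hc.1)]
        · rw [if_pos rfl]
          have h1 : (⟨2 * ((i : ℕ) / 2) + 1, by omega⟩ : Fin (2 * e)) = i := Fin.ext h
          have h2 : (⟨2 * ((i : ℕ) / 2), by omega⟩ : Fin (2 * e)) ≠ i := by
            simp [Fin.ext_iff]; omega
          rw [h1]
          simp [Matrix.single_apply_of_ne _ _ _ _ _ (fun hc => h2 hc.1)]
      · intro n _ hn
        have hnv : (n : ℕ) ≠ (i : ℕ) / 2 := fun h => hn (Fin.ext h)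
        have h1 : (⟨2 * (n : ℕ), by omega⟩ : Fin (2 * e)) ≠ i := by
          simp [Fin.ext_iff]; omega
        have h2 : (⟨2 * (n : ℕ) + 1, by omega⟩ : Fin (2 * e)) ≠ i := by
          simp [Fin.ext_iff]; omega
        rw [Matrix.single_apply_of_ne _ _ _ _ _ (fun hc => h1 hc.1),
          Matrix.single_apply_of_ne _ _ _ _ _ (fun hc => h2 hc.1)]
        simp
      · intro h
        exact absurd (Finset.mem_univ _) h
    · rw [if_neg hij]
      refine Finset.sum_eq_zero fun n _ => ?_
      have : ∀ a : Fin (2 * e), ¬(a = i ∧ a = j) := fun a ⟨h1, h2⟩ => hij (h1 ▸ h2 ▸ rfl)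
      rw [Matrix.single_apply_of_ne _ _ _ _ _ (this _),
        Matrix.single_apply_of_ne _ _ _ _ _ (this _)]
      simp
  refine ⟨hherm, htr, hsq, ?_⟩
  -- the GHZ correlation
  have hd : ((2 * e : ℕ) : ℂ) ≠ 0 := by
    simp only [Nat.cast_mul, Nat.cast_ofNat, ne_eq, mul_eq_zero]
    push_neg
    exact ⟨two_ne_zero, Nat.cast_ne_zero.mpr (by omega)⟩
  rw [ghz, Matrix.smul_mul, Matrix.trace_smul, Finset.sum_mul, Matrix.trace_sum]
  have step : ∀ j : Fin (2 * e),
      (((∑ k : Fin (2 * e),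
        (Matrix.single j k (1 : ℂ)) ⊗ₖ (Matrix.single j k (1 : ℂ))) *
        (X ⊗ₖ X)).trace) = ∑ k : Fin (2 * e), X k j * X k j := by
    intro j
    rw [Finset.sum_mul, Matrix.trace_sum]
    refine Finset.sum_congr rfl fun k _ => ?_
    rw [← Matrix.mul_kronecker_mul, Matrix.trace_kronecker]
    congr 1 <;>
    · rw [Matrix.trace]
      simp [Matrix.diag, Matrix.mul_apply, Matrix.single, Matrix.of_apply, ite_and]
  rw [Finset.sum_congr rfl (fun j _ => step j)]
  have : ∑ j : Fin (2 * e), ∑ k : Fin (2 * e), X k j * X k j = (X * Xᵀ).trace := by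
    rw [Matrix.trace]
    simp only [Matrix.diag, Matrix.mul_apply, Matrix.transpose_apply]
    rw [Finset.sum_comm]
  rw [this, htrans, Matrix.mul_neg, hsq, Matrix.trace_neg, Matrix.trace_one]
  simp only [smul_eq_mul, Finset.card_univ, Fintype.card_fin]
  field_simp
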